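/- Suppose V_k ∈ ℝ^{m×k} has orthonormal columns and admits an LU-type factorization V_k = D_k R_k where D_k ∈ ℝ^{m×k} is unit lower trapezoidal and R_k ∈ ℝ^{k×k} is upper triangular and invertible. If A U_k = V_{k+1} H̃_{k+1,k} with H̃_{k+1,k} upper Hessenberg, and U_k = L_k R'_k with R'_k ∈ ℝ^{k×k} invertible, then A L_k = D_{k+1} (R_{k+1} H̃_{k+1,k} (R'_k)⁻¹) and the matrix H_{k+1,k} := R_{k+1} H̃_{k+1,k} (R'_k)⁻¹ is again upper Hessenberg. -/
import Mathlib


open Matrix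

/-- A rectangular matrix is upper Hessenberg if its entries vanish below the
first subdiagonal. -/
def IsUpperHessenberg {p q : ℕ} (H : Matrix (Fin p) (Fin q) ℝ) : Prop :=
  ∀ (i : Fin p) (j : Fin q), (j : ℕ) + 1 < (i : ℕ) → H i j = 0

/-- Transferring the orthogonal Hessenberg relation `A U = V H̃` through the
LU-type factorizations `V = D R` and `U = L R'` yields `A L = D (R H̃ R'⁻¹)`,
and `H := R H̃ R'⁻¹` is again upper Hessenberg. -/
theorem hessenberg_transfer (m n k : ℕ)
    (A : Matrix (Fin m) (Fin n) ℝ)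
    (V : Matrix (Fin m) (Fin (k + 1)) ℝ) (U : Matrix (Fin n) (Fin k) ℝ)
    (D : Matrix (Fin m) (Fin (k + 1)) ℝ) (L : Matrix (Fin n) (Fin k) ℝ)
    (R : Matrix (Fin (k + 1)) (Fin (k + 1)) ℝ) (R' : Matrix (Fin k) (Fin k) ℝ)
    -- V has orthonormal columns
    (hV : Vᵀ * V = 1)
    -- D is unit lower trapezoidal
    (hD1 : ∀ (i : Fin m) (j : Fin (k + 1)), (i : ℕ) = (j : ℕ) → D i j = 1)
    (hD0 : ∀ (i : Fin m) (j : Fin (k + 1)), (i : ℕ) < (j : ℕ) → D i j = 0)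
    -- R and R' are upper triangular and invertible
    (hR : R.BlockTriangular id) (hR' : R'.BlockTriangular id)
    (hRinv : IsUnit R.det) (hR'inv : IsUnit R'.det)
    -- the LU-type factorizations
    (hVDR : V = D * R) (hULR : U = L * R')
    -- the orthogonal Hessenberg relation
    (Htilde : Matrix (Fin (k + 1)) (Fin k) ℝ) (hHt : IsUpperHessenberg Htilde)
    (hAU : A * U = V * Htilde) :
    A * L = D * (R * Htilde * R'⁻¹) ∧ IsUpperHessenberg (R * Htilde * R'⁻¹) := by
  have hinv : R' * R'⁻¹ = 1 := Matrix.mul_nonsing_inv R' hR'inv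
  constructor
  · have h1 : A * L * R' = D * R * Htilde := by
      rw [Matrix.mul_assoc, ← hULR, hAU, hVDR]
    calc A * L = A * L * (R' * R'⁻¹) := by rw [hinv, Matrix.mul_one]
      _ = (A * L * R') * R'⁻¹ := by simp only [Matrix.mul_assoc]
      _ = D * (R * Htilde * R'⁻¹) := by
          rw [h1]; simp only [Matrix.mul_assoc]
  · have : Invertible R' := R'.invertibleOfIsUnitDet hR'inv
    have hR'i : R'⁻¹.BlockTriangular id :=
      Matrix.blockTriangular_inv_of_blockTriangular hR'
    intro i j hij
    rw [Matrix.mul_apply]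
    apply Finset.sum_eq_zero
    intro b _
    by_cases hbj : (j : Fin k) < b
    · rw [hR'i hbj, mul_zero]
    · push_neg at hbj
      have : (R * Htilde) i b = 0 := by
        rw [Matrix.mul_apply]
        apply Finset.sum_eq_zero
        intro a _
        by_cases hai : a < i
        · rw [hR hai, zero_mul]
        · push_neg at hai
          have : (b : ℕ) + 1 < (a : ℕ) := by
            have hb : (b : ℕ) ≤ (j : ℕ) := hbj
            have ha : (i : ℕ) ≤ (a : ℕ) := hai
            omega
          rw [hHt a b this, mul_zero]
      rw [this, zero_mul]
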